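/- Let 𝒜 be an m-order n-dimensional strong M-tensor with a_{ii…i} = 1 for all i, let 1 ≤ s,k ≤ n−1, and let α_i ∈ [0,1], β_j ∈ [0,1]. Then there exists a nonzero nonnegative vector x₁ ∈ ℝⁿ (a Perron vector of the nonnegative tensor 𝓛 + 𝓕, i.e. (𝓛+𝓕)x₁^{m−1} = ρ(𝓛+𝓕)x₁^{[m−1]}) such that (M(ℰ₂)^{−1}ℱ₂)x₁^{m−1} ≤ (M(ℰ₁)^{−1}ℱ₁)x₁^{m−1} entrywise. -/

import Mathlib

open scoped BigOperators

namespace MultilinearPaper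

noncomputable section

/-- An `m`-order `n`-dimensional real tensor: the first index is separated and
the remaining `m - 1` indices are given as a function `Fin (m-1) → Fin n`. -/
abbrev Tensor (m n : ℕ) : Type := Fin n → (Fin (m - 1) → Fin n) → ℝ

variable {m n : ℕ}

/-- The vector `𝒜 x^{m-1}` (real version):
`(𝒜 x^{m-1})_i = ∑_{i₂,…,i_m} a_{i i₂ … i_m} x_{i₂} ⋯ x_{i_m}`. -/
def tmul (A : Tensor m n) (x : Fin n → ℝ) : Fin n → ℝ :=
  fun i => ∑ f : Fin (m - 1) → Fin n, A i f * ∏ t, x (f t)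

/-- The vector `𝒜 x^{m-1}` evaluated at a complex vector. -/
def tmulC (A : Tensor m n) (x : Fin n → ℂ) : Fin n → ℂ :=
  fun i => ∑ f : Fin (m - 1) → Fin n, (A i f : ℂ) * ∏ t, x (f t)

/-- The identity tensor `𝓘`. -/
def idT (m n : ℕ) : Tensor m n :=
  fun i f => if ∀ t, f t = i then 1 else 0

/-- Entrywise nonnegativity of a tensor. -/
def TNonneg (A : Tensor m n) : Prop := ∀ i f, 0 ≤ A i f

/-- `lam` is an eigenvalue of `A`: there is `x ≠ 0` over `ℂ` with
`𝒜 x^{m-1} = lam • x^{[m-1]}`. -/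
def IsEigenvalue (A : Tensor m n) (lam : ℂ) : Prop :=
  ∃ x : Fin n → ℂ, x ≠ 0 ∧ ∀ i, tmulC A x i = lam * (x i) ^ (m - 1)

/-- Spectral radius: supremum of moduli of eigenvalues. -/
def rho (A : Tensor m n) : ℝ :=
  sSup {r : ℝ | ∃ lam : ℂ, IsEigenvalue A lam ∧ r = ‖lam‖}

/-- `A` is a strong M-tensor: `A = η 𝓘 - B` with `B ≥ 0` and `η > ρ(B)`. -/
def StrongM (A : Tensor m n) : Prop :=
  ∃ (η : ℝ) (B : Tensor m n), TNonneg B ∧ rho B < η ∧ A = η • idT m n - B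

/-- Matrix–tensor product `(P𝓑)_{j i₂…i_m} = ∑_{j₂} P_{j j₂} b_{j₂ i₂ … i_m}`. -/
def mmul (P : Matrix (Fin n) (Fin n) ℝ) (A : Tensor m n) : Tensor m n :=
  fun j f => ∑ j₂, P j j₂ * A j₂ f

/-- Majorization matrix `M(𝒜)_{ij} = a_{i j … j}`. -/
def maj (A : Tensor m n) : Matrix (Fin n) (Fin n) ℝ :=
  fun i j => A i (fun _ => j)

/-- `a_{i i … i} = 1` for all `i`. -/
def UnitDiag (A : Tensor m n) : Prop := ∀ i, A i (fun _ => i) = 1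

/-- `L`: the negatives of the strictly lower triangular entries of `M(𝒜)`. -/
def Lmat (A : Tensor m n) : Matrix (Fin n) (Fin n) ℝ :=
  fun i j => if (j : ℕ) < (i : ℕ) then -maj A i j else 0

/-- `𝓛 = L𝓘`. -/
def Ltens (A : Tensor m n) : Tensor m n := mmul (Lmat A) (idT m n)

/-- `𝓕 = 𝓘 - 𝓛 - 𝒜`. -/
def Ftens (A : Tensor m n) : Tensor m n := idT m n - Ltens A - A

/-- The matrix `S_α^s`, with `(S_α^s)_{i,i+s} = -α_i a_{i(i+s)…(i+s)}`. -/
def Smat (A : Tensor m n) (α : Fin n → ℝ) (s : ℕ) : Matrix (Fin n) (Fin n) ℝ :=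
  fun i j => if (j : ℕ) = (i : ℕ) + s then -(α i * maj A i j) else 0

/-- The matrix `K_β^k`, with `(K_β^k)_{i,i-k} = -β_i a_{i(i-k)…(i-k)}`. -/
def Kmat (A : Tensor m n) (β : Fin n → ℝ) (k : ℕ) : Matrix (Fin n) (Fin n) ℝ :=
  fun i j => if (i : ℕ) = (j : ℕ) + k then -(β i * maj A i j) else 0

/-- The preconditioner `P_{αβ}(s,k) = I + S_α^s + K_β^k`. -/
def Pmat (A : Tensor m n) (α β : Fin n → ℝ) (s k : ℕ) : Matrix (Fin n) (Fin n) ℝ :=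
  1 + Smat A α s + Kmat A β k

/-- The preconditioned tensor `𝒜_{αβ}(s,k) = P_{αβ}(s,k) 𝒜`. -/
def precond (A : Tensor m n) (α β : Fin n → ℝ) (s k : ℕ) : Tensor m n :=
  mmul (Pmat A α β s k) A

/- Jacobi-type splittings. -/

def E1 (A : Tensor m n) (α β : Fin n → ℝ) (s k : ℕ) : Tensor m n :=
  mmul (Pmat A α β s k) (idT m n)

def F1 (A : Tensor m n) (α β : Fin n → ℝ) (s k : ℕ) : Tensor m n :=
  mmul (Pmat A α β s k) (Ltens A + Ftens A)

def F2 (A : Tensor m n) (α β : Fin n → ℝ) (s k : ℕ) : Tensor m n :=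
  mmul (Pmat A α β s k) (Ltens A + Ftens A) - mmul (Smat A α s + Kmat A β k) (idT m n)

def F3 (A : Tensor m n) (α : Fin n → ℝ) (s : ℕ) : Tensor m n :=
  mmul (1 + Smat A α s) (Ltens A + Ftens A) - mmul (Smat A α s) (idT m n)

def F4 (A : Tensor m n) (β : Fin n → ℝ) (k : ℕ) : Tensor m n :=
  mmul (1 + Kmat A β k) (Ltens A + Ftens A) - mmul (Kmat A β k) (idT m n)

/-- `S`: the matrix `S_α^1` with all parameters equal to `1`. -/
def Sfull (A : Tensor m n) : Matrix (Fin n) (Fin n) ℝ := Smat A (fun _ => 1) 1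

/-- `K`: the matrix `K_β^1` with all parameters equal to `1`. -/
def Kfull (A : Tensor m n) : Matrix (Fin n) (Fin n) ℝ := Kmat A (fun _ => 1) 1

/-- `𝓛′` with `𝓛 = K𝓘 + 𝓛′`. -/
def Lprime (A : Tensor m n) : Tensor m n := Ltens A - mmul (Kfull A) (idT m n)

/-- `𝓕′` with `𝓕 = S𝓘 + 𝓕′`. -/
def Fprime (A : Tensor m n) : Tensor m n := Ftens A - mmul (Sfull A) (idT m n)

/-- `ℰ₅ = (I - S_α K - K_β S)𝓘`. -/
def E5 (A : Tensor m n) (α β : Fin n → ℝ) : Tensor m n :=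
  mmul (1 - Smat A α 1 * Kfull A - Kmat A β 1 * Sfull A) (idT m n)

/-- `ℱ₅ = 𝓛 + 𝓕 - (S_α + K_β)𝓘 + S_α(𝓛′ + 𝓕) + K_β(𝓛 + 𝓕′)`. -/
def F5 (A : Tensor m n) (α β : Fin n → ℝ) : Tensor m n :=
  Ltens A + Ftens A - mmul (Smat A α 1 + Kmat A β 1) (idT m n)
    + mmul (Smat A α 1) (Lprime A + Ftens A) + mmul (Kmat A β 1) (Ltens A + Fprime A)

def finShiftUp (i : Fin n) (s : ℕ) (h : (i : ℕ) + s < n) : Fin n := ⟨(i : ℕ) + s, h⟩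

def finShiftDown (i : Fin n) (k : ℕ) : Fin n :=
  ⟨(i : ℕ) - k, lt_of_le_of_lt (Nat.sub_le _ _) i.isLt⟩

/-- The `i`-th quantity appearing in conditions (7) and (11):
`α_i a_{i(i+k)…(i+k)} a_{(i+k)i…i} + β_i a_{i(i-k)…(i-k)} a_{(i-k)i…i}`,
with each term dropped when its index is out of range. -/
def condExpr (A : Tensor m n) (α β : Fin n → ℝ) (k : ℕ) (i : Fin n) : ℝ :=
  (if h : (i : ℕ) + k < n then
      α i * maj A i (finShiftUp i k h) * maj A (finShiftUp i k h) i
    else 0) +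
  (if k ≤ (i : ℕ) then
      β i * maj A i (finShiftDown i k) * maj A (finShiftDown i k) i
    else 0)

/-- Conditions (7) (for `k = 1`) and (11) (for general `k = s`). -/
def Cond (A : Tensor m n) (α β : Fin n → ℝ) (k : ℕ) : Prop :=
  ∀ i : Fin n, 0 < condExpr A α β k i ∧ condExpr A α β k i < 1

/- Gauss–Seidel-type splittings. -/

/-- The diagonal part of `M(T)` as a matrix. -/
def DmatOf (T : Tensor m n) : Matrix (Fin n) (Fin n) ℝ :=
  fun i j => if i = j then maj T i j else 0

/-- The strictly lower triangular part of `M(T)` as a matrix. -/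
def LmatOf (T : Tensor m n) : Matrix (Fin n) (Fin n) ℝ :=
  fun i j => if (j : ℕ) < (i : ℕ) then maj T i j else 0

/-- `𝓓_α = D_α 𝓘` from `S_α^s 𝓛 = 𝓓_α + 𝓛_α + 𝓕_α`. -/
def Dalpha (A : Tensor m n) (α : Fin n → ℝ) (s : ℕ) : Tensor m n :=
  mmul (DmatOf (mmul (Smat A α s) (Ltens A))) (idT m n)

def Lalpha (A : Tensor m n) (α : Fin n → ℝ) (s : ℕ) : Tensor m n :=
  mmul (LmatOf (mmul (Smat A α s) (Ltens A))) (idT m n)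

def Falpha (A : Tensor m n) (α : Fin n → ℝ) (s : ℕ) : Tensor m n :=
  mmul (Smat A α s) (Ltens A) - Dalpha A α s - Lalpha A α s

/-- `𝓓_β = D_β 𝓘` from `K_β^k 𝓕 = 𝓓_β + 𝓛_β + 𝓕_β`. -/
def Dbeta (A : Tensor m n) (β : Fin n → ℝ) (k : ℕ) : Tensor m n :=
  mmul (DmatOf (mmul (Kmat A β k) (Ftens A))) (idT m n)

def Lbeta (A : Tensor m n) (β : Fin n → ℝ) (k : ℕ) : Tensor m n :=
  mmul (LmatOf (mmul (Kmat A β k) (Ftens A))) (idT m n)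

def Fbeta (A : Tensor m n) (β : Fin n → ℝ) (k : ℕ) : Tensor m n :=
  mmul (Kmat A β k) (Ftens A) - Dbeta A β k - Lbeta A β k

def M1 (A : Tensor m n) (α β : Fin n → ℝ) (s k : ℕ) : Tensor m n :=
  mmul (Pmat A α β s k) (idT m n - Ltens A)

def N1 (A : Tensor m n) (α β : Fin n → ℝ) (s k : ℕ) : Tensor m n :=
  mmul (Pmat A α β s k) (Ftens A)

def M2 (A : Tensor m n) (α β : Fin n → ℝ) (s k : ℕ) : Tensor m n :=
  idT m n - Ltens A + mmul (Kmat A β k) (idT m n) - mmul (Kmat A β k) (Ltens A)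
    - Dalpha A α s - Lalpha A α s - Dbeta A β k - Lbeta A β k

def N2 (A : Tensor m n) (α β : Fin n → ℝ) (s k : ℕ) : Tensor m n :=
  Ftens A - mmul (Smat A α s) (idT m n) + mmul (Smat A α s) (Ftens A)
    + Falpha A α s + Fbeta A β k

def M3 (A : Tensor m n) (α : Fin n → ℝ) (s : ℕ) : Tensor m n :=
  idT m n - Ltens A - Dalpha A α s - Lalpha A α s

def N3 (A : Tensor m n) (α : Fin n → ℝ) (s : ℕ) : Tensor m n :=
  Ftens A - mmul (Smat A α s) (idT m n) + mmul (Smat A α s) (Ftens A) + Falpha A α s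

def M4 (A : Tensor m n) (β : Fin n → ℝ) (k : ℕ) : Tensor m n :=
  mmul (1 + Kmat A β k) (idT m n - Ltens A) - Dbeta A β k - Lbeta A β k

def N4 (A : Tensor m n) (β : Fin n → ℝ) (k : ℕ) : Tensor m n :=
  Ftens A + Fbeta A β k

/- Preconditioned SOR. -/

def Dab (A : Tensor m n) (α β : Fin n → ℝ) (s k : ℕ) : Tensor m n :=
  idT m n - Dalpha A α s - Dbeta A β k

def Lab (A : Tensor m n) (α β : Fin n → ℝ) (s k : ℕ) : Tensor m n :=
  Ltens A - mmul (Kmat A β k) (idT m n) + mmul (Kmat A β k) (Ltens A)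
    + Lalpha A α s + Lbeta A β k

def Fab (A : Tensor m n) (α β : Fin n → ℝ) (s k : ℕ) : Tensor m n :=
  Ftens A - mmul (Smat A α s) (idT m n) + mmul (Smat A α s) (Ftens A)
    + Falpha A α s + Fbeta A β k

def Eomega (A : Tensor m n) (α β : Fin n → ℝ) (s k : ℕ) (ω : ℝ) : Tensor m n :=
  (1 / ω) • (Dab A α β s k - ω • Lab A α β s k)

def Fomega (A : Tensor m n) (α β : Fin n → ℝ) (s k : ℕ) (ω : ℝ) : Tensor m n :=
  (1 / ω) • ((1 - ω) • Dab A α β s k + ω • Fab A α β s k)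

/-- Preconditioned SOR iteration tensor `ℋ_{αβ}(ω)`. -/
def Hsor (A : Tensor m n) (α β : Fin n → ℝ) (s k : ℕ) (ω : ℝ) : Tensor m n :=
  mmul (maj (Eomega A α β s k ω))⁻¹ (Fomega A α β s k ω)

/-- Unpreconditioned SOR iteration tensor `ℋ(ω) = M(𝓘-ω𝓛)^{-1}((1-ω)𝓘+ω𝓕)`. -/
def Hu (A : Tensor m n) (ω : ℝ) : Tensor m n :=
  mmul (maj (idT m n - ω • Ltens A))⁻¹ ((1 - ω) • idT m n + ω • Ftens A)

/-- A tensor is reducible if there is a nonempty proper index subset `I` with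
`a_{i₁ i₂ … i_m} = 0` whenever `i₁ ∈ I` and `i₂, …, i_m ∉ I`. -/
def TReducible (A : Tensor m n) : Prop :=
  ∃ I : Set (Fin n), I.Nonempty ∧ I ≠ Set.univ ∧
    ∀ i f, i ∈ I → (∀ t, f t ∉ I) → A i f = 0

section AuxBasic

variable {m n : ℕ}

lemma tmul_nonneg' {C : Tensor m n} (hC : TNonneg C) {x : Fin n → ℝ}
    (hx : ∀ i, 0 ≤ x i) (i : Fin n) : 0 ≤ tmul C x i :=
  Finset.sum_nonneg fun f _ => mul_nonneg (hC i f)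
    (Finset.prod_nonneg fun t _ => hx _)

lemma tmul_mono {C : Tensor m n} (hC : TNonneg C) {x y : Fin n → ℝ}
    (hx : ∀ i, 0 ≤ x i) (hxy : ∀ i, x i ≤ y i) (i : Fin n) :
    tmul C x i ≤ tmul C y i :=
  Finset.sum_le_sum fun f _ => mul_le_mul_of_nonneg_left
    (Finset.prod_le_prod (fun t _ => hx _) (fun t _ => hxy _)) (hC i f)

lemma tmul_le_of_le {C C' : Tensor m n} (h : ∀ i f, C i f ≤ C' i f) {x : Fin n → ℝ}
    (hx : ∀ i, 0 ≤ x i) (i : Fin n) : tmul C x i ≤ tmul C' x i :=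
  Finset.sum_le_sum fun f _ => mul_le_mul_of_nonneg_right (h i f)
    (Finset.prod_nonneg fun t _ => hx _)

lemma continuous_tmul (C : Tensor m n) (i : Fin n) :
    Continuous fun x : Fin n → ℝ => tmul C x i := by
  unfold tmul
  exact continuous_finset_sum _ fun f _ => continuous_const.mul
    (continuous_finset_prod _ fun t _ => continuous_apply _)

lemma tmul_smul' (C : Tensor m n) (c : ℝ) (x : Fin n → ℝ) (i : Fin n) :
    tmul C (c • x) i = c ^ (m - 1) * tmul C x i := by
  unfold tmul
  rw [Finset.mul_sum]
  refine Finset.sum_congr rfl fun f _ => ?_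
  have : (∏ t, (c • x) (f t)) = c ^ (m - 1) * ∏ t, x (f t) := by
    simp only [Pi.smul_apply, smul_eq_mul]
    rw [Finset.prod_mul_distrib, Finset.prod_const, Finset.card_univ, Fintype.card_fin]
  rw [this]; ring

lemma tmul_sub' (T T' : Tensor m n) (x : Fin n → ℝ) (i : Fin n) :
    tmul (T - T') x i = tmul T x i - tmul T' x i := by
  unfold tmul
  rw [← Finset.sum_sub_distrib]
  refine Finset.sum_congr rfl fun f _ => ?_
  have : (T - T') i f = T i f - T' i f := rfl
  rw [this]; ring

lemma tmul_mmul (M : Matrix (Fin n) (Fin n) ℝ) (T : Tensor m n) (x : Fin n → ℝ) :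
    tmul (mmul M T) x = M.mulVec (fun j => tmul T x j) := by
  funext i
  unfold tmul mmul Matrix.mulVec dotProduct
  simp only [Finset.sum_mul, Finset.mul_sum, mul_assoc]
  exact Finset.sum_comm

lemma tmul_idT (hm : 2 ≤ m) (x : Fin n → ℝ) (i : Fin n) :
    tmul (idT m n) x i = x i ^ (m - 1) := by
  unfold tmul idT
  rw [Finset.sum_eq_single (fun _ => i)]
  · simp [Finset.prod_const, Finset.card_univ]
  · intro f _ hf
    have : ¬ (∀ t, f t = i) := fun h => hf (funext h)
    simp [this]
  · simp

lemma tmulC_idT (hm : 2 ≤ m) (y : Fin n → ℂ) (i : Fin n) :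
    tmulC (idT m n) y i = y i ^ (m - 1) := by
  unfold tmulC idT
  rw [Finset.sum_eq_single (fun _ => i)]
  · simp [Finset.prod_const, Finset.card_univ]
  · intro f _ hf
    have : ¬ (∀ t, f t = i) := fun h => hf (funext h)
    simp [this]
  · simp

lemma tmulC_coe (C : Tensor m n) (x : Fin n → ℝ) (i : Fin n) :
    tmulC C (fun j => (x j : ℂ)) i = (tmul C x i : ℂ) := by
  unfold tmulC tmul
  push_cast
  rfl

end AuxBasic
section AuxCW

variable {m n : ℕ}

/-- Collatz–Wielandt upper bound: if `C` is nonnegative and `z > 0` with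
`C z^{m-1} ≤ r z^{[m-1]}`, then every eigenvalue of `C` has modulus `≤ r`. -/
lemma cw_bound (hn : 1 ≤ n) {C : Tensor m n} (hC : TNonneg C)
    {z : Fin n → ℝ} (hz : ∀ i, 0 < z i) {r : ℝ}
    (hr : ∀ i, tmul C z i ≤ r * z i ^ (m - 1))
    {μ : ℂ} (hμ : IsEigenvalue C μ) : ‖μ‖ ≤ r := by
  obtain ⟨y, hy0, hy⟩ := hμ
  obtain ⟨i₀, -, hi₀⟩ := Finset.exists_max_image Finset.univ
    (fun i => ‖y i‖ / z i) ⟨⟨0, by omega⟩, Finset.mem_univ _⟩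
  set c : ℝ := ‖y i₀‖ / z i₀ with hc
  have hyabs : ∀ i, ‖y i‖ ≤ c * z i := by
    intro i
    have := hi₀ i (Finset.mem_univ i)
    rw [div_le_div_iff₀ (hz i) (hz i₀)] at this
    rw [hc, div_mul_eq_mul_div, le_div_iff₀ (hz i₀)]
    linarith
  have hcpos : 0 < c := by
    obtain ⟨j, hj⟩ : ∃ j, y j ≠ 0 := by
      by_contra h; push_neg at h; exact hy0 (funext h)
    have h1 : 0 < ‖y j‖ := by
      simpa [norm_pos_iff] using hj
    have h2 : ‖y j‖ / z j ≤ c := hi₀ j (Finset.mem_univ j)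
    have := div_pos h1 (hz j)
    linarith
  have hyi₀ : ‖y i₀‖ = c * z i₀ := by
    rw [hc, div_mul_cancel₀ _ (hz i₀).ne']
  have key : ‖μ‖ * ‖y i₀‖ ^ (m - 1) ≤ r * ‖y i₀‖ ^ (m - 1) := by
    have h1 : ‖μ * y i₀ ^ (m - 1)‖ = ‖μ‖ * ‖y i₀‖ ^ (m - 1) := by
      rw [norm_mul, norm_pow]
    have h2 : ‖tmulC C y i₀‖ ≤ c ^ (m - 1) * tmul C z i₀ := by
      calc ‖tmulC C y i₀‖
          ≤ ∑ f : Fin (m - 1) → Fin n, ‖(C i₀ f : ℂ) * ∏ t, y (f t)‖ := by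
            exact norm_sum_le _ _
        _ ≤ ∑ f : Fin (m - 1) → Fin n, C i₀ f * ∏ t, (c * z (f t)) := by
            refine Finset.sum_le_sum fun f _ => ?_
            rw [norm_mul, Complex.norm_real, Real.norm_eq_abs, abs_of_nonneg (hC i₀ f), norm_prod]
            refine mul_le_mul_of_nonneg_left ?_ (hC i₀ f)
            exact Finset.prod_le_prod (fun t _ => norm_nonneg _)
              (fun t _ => hyabs _)
        _ = c ^ (m - 1) * tmul C z i₀ := by
            unfold tmul
            rw [Finset.mul_sum]
            refine Finset.sum_congr rfl fun f _ => ?_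
            rw [Finset.prod_mul_distrib, Finset.prod_const, Finset.card_univ,
              Fintype.card_fin]
            ring
    have h3 : c ^ (m - 1) * tmul C z i₀ ≤ c ^ (m - 1) * (r * z i₀ ^ (m - 1)) :=
      mul_le_mul_of_nonneg_left (hr i₀) (pow_nonneg hcpos.le _)
    have h4 : c ^ (m - 1) * (r * z i₀ ^ (m - 1)) = r * ‖y i₀‖ ^ (m - 1) := by
      rw [hyi₀, mul_pow]; ring
    rw [← h1, ← hy i₀]
    calc ‖tmulC C y i₀‖ ≤ c ^ (m - 1) * tmul C z i₀ := h2
      _ ≤ c ^ (m - 1) * (r * z i₀ ^ (m - 1)) := h3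
      _ = r * ‖y i₀‖ ^ (m - 1) := h4
  have hpos : 0 < ‖y i₀‖ ^ (m - 1) := by
    rw [hyi₀]; exact pow_pos (mul_pos hcpos (hz i₀)) _
  exact le_of_mul_le_mul_right key hpos

/-- Eigenvalue moduli of any tensor are bounded. -/
lemma eigen_bdd (hn : 1 ≤ n) (D : Tensor m n) :
    ∀ μ : ℂ, IsEigenvalue D μ →
      ‖μ‖ ≤ ∑ i, ∑ f : Fin (m - 1) → Fin n, |D i f| := by
  intro μ hμ
  obtain ⟨y, hy0, hy⟩ := hμ
  obtain ⟨i₀, -, hi₀⟩ := Finset.exists_max_image Finset.univ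
    (fun i => ‖y i‖) ⟨⟨0, by omega⟩, Finset.mem_univ _⟩
  have hpos : 0 < ‖y i₀‖ := by
    obtain ⟨j, hj⟩ : ∃ j, y j ≠ 0 := by
      by_contra h; push_neg at h; exact hy0 (funext h)
    have h1 : 0 < ‖y j‖ := by
      simpa [norm_pos_iff] using hj
    exact lt_of_lt_of_le h1 (hi₀ j (Finset.mem_univ j))
  have key : ‖μ‖ * ‖y i₀‖ ^ (m - 1) ≤
      (∑ f : Fin (m - 1) → Fin n, |D i₀ f|) * ‖y i₀‖ ^ (m - 1) := by
    have h1 : ‖μ * y i₀ ^ (m - 1)‖ = ‖μ‖ * ‖y i₀‖ ^ (m - 1) := by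
      rw [norm_mul, norm_pow]
    rw [← h1, ← hy i₀]
    calc ‖tmulC D y i₀‖
        ≤ ∑ f : Fin (m - 1) → Fin n, ‖(D i₀ f : ℂ) * ∏ t, y (f t)‖ :=
          norm_sum_le _ _
      _ ≤ ∑ f : Fin (m - 1) → Fin n, |D i₀ f| * ‖y i₀‖ ^ (m - 1) := by
          refine Finset.sum_le_sum fun f _ => ?_
          rw [norm_mul, Complex.norm_real, Real.norm_eq_abs, norm_prod]
          refine mul_le_mul_of_nonneg_left ?_ (abs_nonneg _)
          calc ∏ t, ‖y (f t)‖ ≤ ∏ t : Fin (m - 1), ‖y i₀‖ :=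
                Finset.prod_le_prod (fun t _ => norm_nonneg _)
                  (fun t _ => hi₀ _ (Finset.mem_univ _))
            _ = ‖y i₀‖ ^ (m - 1) := by
                rw [Finset.prod_const, Finset.card_univ, Fintype.card_fin]
      _ = (∑ f : Fin (m - 1) → Fin n, |D i₀ f|) * ‖y i₀‖ ^ (m - 1) := by
          rw [Finset.sum_mul]
  have h2 : ‖μ‖ ≤ ∑ f : Fin (m - 1) → Fin n, |D i₀ f| :=
    le_of_mul_le_mul_right key (pow_pos hpos _)
  refine h2.trans ?_
  exact Finset.single_le_sum
    (f := fun i => ∑ f : Fin (m - 1) → Fin n, |D i f|)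
    (fun i _ => Finset.sum_nonneg fun f _ => abs_nonneg _) (Finset.mem_univ i₀)

lemma rho_bddAbove (hn : 1 ≤ n) (D : Tensor m n) :
    BddAbove {r : ℝ | ∃ lam : ℂ, IsEigenvalue D lam ∧ r = ‖lam‖} := by
  refine ⟨∑ i, ∑ f : Fin (m - 1) → Fin n, |D i f|, fun r hr => ?_⟩
  obtain ⟨lam, hlam, rfl⟩ := hr
  exact eigen_bdd hn D lam hlam

end AuxCW
section AuxPos

variable {m n : ℕ}

lemma tmul_update_ge {C : Tensor m n} (hC : TNonneg C) {x : Fin n → ℝ}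
    (hx : ∀ j, 0 ≤ x j) {δ : ℝ} (hδ : 0 ≤ δ) (i₀ i : Fin n) :
    tmul C x i + C i (fun _ => i₀) * ((x i₀ + δ) ^ (m - 1) - x i₀ ^ (m - 1)) ≤
      tmul C (fun j => x j + if j = i₀ then δ else 0) i := by
  classical
  set x' : Fin n → ℝ := fun j => x j + if j = i₀ then δ else 0 with hx'def
  have hxx' : ∀ j, x j ≤ x' j := fun j =>
    le_add_of_nonneg_right (by split <;> simp [hδ])
  set c : Fin (m - 1) → Fin n := fun _ => i₀ with hcdef
  have e1 : tmul C x i = ∑ f : Fin (m - 1) → Fin n, C i f * ∏ t, x (f t) := rfl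
  have e2 : tmul C x' i = ∑ f : Fin (m - 1) → Fin n, C i f * ∏ t, x' (f t) := rfl
  have h1 : (∑ f ∈ Finset.univ.erase c, C i f * ∏ t, x (f t)) + C i c * ∏ t, x (c t)
      = ∑ f : Fin (m - 1) → Fin n, C i f * ∏ t, x (f t) :=
    Finset.sum_erase_add _ _ (Finset.mem_univ c)
  have h2 : (∑ f ∈ Finset.univ.erase c, C i f * ∏ t, x' (f t)) + C i c * ∏ t, x' (c t)
      = ∑ f : Fin (m - 1) → Fin n, C i f * ∏ t, x' (f t) :=
    Finset.sum_erase_add _ _ (Finset.mem_univ c)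
  have h3 : (∑ f ∈ Finset.univ.erase c, C i f * ∏ t, x (f t)) ≤
      ∑ f ∈ Finset.univ.erase c, C i f * ∏ t, x' (f t) :=
    Finset.sum_le_sum fun f _ => mul_le_mul_of_nonneg_left
      (Finset.prod_le_prod (fun t _ => hx _) (fun t _ => hxx' _)) (hC i f)
  have h4 : (∏ t, x (c t)) = x i₀ ^ (m - 1) := by
    simp [hcdef, Finset.prod_const, Finset.card_univ]
  have h5 : (∏ t, x' (c t)) = (x i₀ + δ) ^ (m - 1) := by
    have : x' i₀ = x i₀ + δ := by simp [hx'def]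
    simp [hcdef, this, Finset.prod_const, Finset.card_univ]
  rw [e1, e2, ← h1, ← h2, h4, h5]
  nlinarith [h3]

/-- Existence of a positive eigenpair for an entrywise positive tensor. -/
lemma posPF (hm : 2 ≤ m) (hn : 1 ≤ n) (C : Tensor m n) (hC : ∀ i f, 0 < C i f) :
    ∃ (lam : ℝ) (x : Fin n → ℝ), 0 ≤ lam ∧ (∀ i, 0 < x i) ∧ (∑ i, x i = 1) ∧
      (∀ i, tmul C x i = lam * x i ^ (m - 1)) := by
  classical
  have hCn : TNonneg C := fun i f => (hC i f).le
  have hnpos : (0 : ℝ) < n := by exact_mod_cast hn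
  have hp0 : m - 1 ≠ 0 := by omega
  set Rmax : ℝ := ∑ i, ∑ f : Fin (m - 1) → Fin n, C i f with hRmax
  set M : ℝ := Rmax * (n : ℝ) ^ (m - 1) with hM
  set S : Set (ℝ × (Fin n → ℝ)) :=
    {q | 0 ≤ q.1 ∧ (∀ i, 0 ≤ q.2 i) ∧ (∑ i, q.2 i) = 1 ∧
      ∀ i, q.1 * q.2 i ^ (m - 1) ≤ tmul C q.2 i} with hSdef
  have hxle1 : ∀ q ∈ S, ∀ i, q.2 i ≤ 1 := by
    rintro q ⟨-, hq2, hq3, -⟩ i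
    calc q.2 i ≤ ∑ j, q.2 j := Finset.single_le_sum (fun j _ => hq2 j) (Finset.mem_univ i)
      _ = 1 := hq3
  have htle : ∀ q ∈ S, ∀ i, tmul C q.2 i ≤ Rmax := by
    intro q hq i
    have h1 : tmul C q.2 i ≤ ∑ f : Fin (m - 1) → Fin n, C i f := by
      refine Finset.sum_le_sum fun f _ => ?_
      have : (∏ t, q.2 (f t)) ≤ 1 :=
        Finset.prod_le_one (fun t _ => hq.2.1 _) (fun t _ => hxle1 q hq _)
      nlinarith [hC i f, this]
    refine h1.trans ?_
    exact Finset.single_le_sum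
      (f := fun i => ∑ f : Fin (m - 1) → Fin n, C i f)
      (fun i _ => Finset.sum_nonneg fun f _ => (hC i f).le) (Finset.mem_univ i)
  have hbound : ∀ q ∈ S, q.1 ≤ M := by
    intro q hq
    obtain ⟨i, hi⟩ : ∃ i, 1 / (n : ℝ) ≤ q.2 i := by
      by_contra h
      push_neg at h
      have : (∑ i, q.2 i) < ∑ _i : Fin n, 1 / (n : ℝ) :=
        Finset.sum_lt_sum_of_nonempty ⟨⟨0, by omega⟩, Finset.mem_univ _⟩
          (fun i _ => h i)
      rw [hq.2.2.1, Finset.sum_const, Finset.card_univ, Fintype.card_fin,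
        nsmul_eq_mul, mul_one_div, div_self hnpos.ne'] at this
      exact lt_irrefl _ this
    have h1 : q.1 * (1 / (n : ℝ)) ^ (m - 1) ≤ q.1 * q.2 i ^ (m - 1) := by
      refine mul_le_mul_of_nonneg_left (pow_le_pow_left₀ (by positivity) hi _) hq.1
    have h2 : q.1 * (1 / (n : ℝ)) ^ (m - 1) ≤ Rmax :=
      h1.trans ((hq.2.2.2 i).trans (htle q hq i))
    have ha : (0 : ℝ) < (n : ℝ) ^ (m - 1) := by positivity
    rw [one_div, inv_pow] at h2
    calc q.1 = q.1 * ((n : ℝ) ^ (m - 1))⁻¹ * (n : ℝ) ^ (m - 1) := by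
          field_simp
      _ ≤ Rmax * (n : ℝ) ^ (m - 1) := mul_le_mul_of_nonneg_right h2 ha.le
  have hSne : ((0 : ℝ), fun _ : Fin n => 1 / (n : ℝ)) ∈ S := by
    refine ⟨le_refl 0, fun i => by positivity, ?_, fun i => ?_⟩
    · rw [Finset.sum_const, Finset.card_univ, Fintype.card_fin, nsmul_eq_mul,
        mul_one_div, div_self hnpos.ne']
    · rw [zero_mul]
      exact tmul_nonneg' hCn (fun i => by positivity) i
  have hclosed : IsClosed S := by
    have h1 : IsClosed {q : ℝ × (Fin n → ℝ) | 0 ≤ q.1} :=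
      isClosed_le continuous_const continuous_fst
    have h2 : IsClosed {q : ℝ × (Fin n → ℝ) | ∀ i, 0 ≤ q.2 i} := by
      rw [Set.setOf_forall]
      exact isClosed_iInter fun i => isClosed_le continuous_const
        ((continuous_apply i).comp continuous_snd)
    have h3 : IsClosed {q : ℝ × (Fin n → ℝ) | (∑ i, q.2 i) = 1} :=
      isClosed_eq (continuous_finset_sum _ fun i _ =>
        (continuous_apply i).comp continuous_snd) continuous_const
    have h4 : IsClosed {q : ℝ × (Fin n → ℝ) | ∀ i, q.1 * q.2 i ^ (m - 1) ≤ tmul C q.2 i} := by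
      rw [Set.setOf_forall]
      exact isClosed_iInter fun i => isClosed_le
        (continuous_fst.mul (((continuous_apply i).comp continuous_snd).pow _))
        ((continuous_tmul C i).comp continuous_snd)
    have : S = {q : ℝ × (Fin n → ℝ) | 0 ≤ q.1} ∩ ({q | ∀ i, 0 ≤ q.2 i} ∩
        ({q | (∑ i, q.2 i) = 1} ∩ {q | ∀ i, q.1 * q.2 i ^ (m - 1) ≤ tmul C q.2 i})) := by
      ext q
      exact ⟨fun h => ⟨h.1, h.2.1, h.2.2.1, h.2.2.2⟩,
        fun h => ⟨h.1, h.2.1, h.2.2.1, h.2.2.2⟩⟩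
    rw [this]
    exact h1.inter (h2.inter (h3.inter h4))
  have hsub : S ⊆ (Set.Icc 0 (max M 0)) ×ˢ (Set.Icc (0 : Fin n → ℝ) 1) := by
    intro q hq
    refine ⟨⟨hq.1, (hbound q hq).trans (le_max_left _ _)⟩, ?_, ?_⟩
    · intro i; exact hq.2.1 i
    · intro i; exact hxle1 q hq i
  have hScomp : IsCompact S :=
    IsCompact.of_isClosed_subset (isCompact_Icc.prod isCompact_Icc) hclosed hsub
  have himco : IsCompact (Prod.fst '' S) := hScomp.image continuous_fst
  have himne : (Prod.fst '' S).Nonempty := ⟨0, ⟨_, hSne, rfl⟩⟩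
  have hbdd : BddAbove (Prod.fst '' S) := by
    refine ⟨max M 0, ?_⟩
    rintro r ⟨q, hq, rfl⟩
    exact (hbound q hq).trans (le_max_left _ _)
  obtain ⟨q, hqS, hq1⟩ := (Set.mem_image _ _ _).mp (himco.sSup_mem himne)
  set lam : ℝ := sSup (Prod.fst '' S) with hlam
  set x : Fin n → ℝ := q.2 with hxdef
  have hqS' := hqS
  obtain ⟨hlam0, hx0, hxsum, hfeas⟩ := hqS
  rw [hq1] at hlam0 hfeas
  -- key: equality at every index
  have heq : ∀ i, tmul C x i = lam * x i ^ (m - 1) := by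
    by_contra hne
    push_neg at hne
    obtain ⟨i₀, hi₀⟩ := hne
    have hlt : lam * x i₀ ^ (m - 1) < tmul C x i₀ := lt_of_le_of_ne (hfeas i₀) (Ne.symm hi₀)
    obtain ⟨imin, -, hmin⟩ := Finset.exists_min_image Finset.univ
      (fun i => C i (fun _ => i₀)) ⟨i₀, Finset.mem_univ _⟩
    set cmin : ℝ := C imin (fun _ => i₀) with hcmin
    have hcminpos : 0 < cmin := hC _ _
    set T : ℝ := tmul C x i₀ with hT
    -- choose δ > 0 with lam * (x i₀ + δ)^(m-1) < T
    have hgc : Continuous fun δ : ℝ => lam * (x i₀ + δ) ^ (m - 1) :=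
      continuous_const.mul ((continuous_const.add continuous_id).pow _)
    have hg0 : (fun δ : ℝ => lam * (x i₀ + δ) ^ (m - 1)) 0 = lam * x i₀ ^ (m - 1) := by
      simp
    have htd : Filter.Tendsto (fun δ : ℝ => lam * (x i₀ + δ) ^ (m - 1))
        (nhdsWithin (0 : ℝ) (Set.Ioi 0)) (nhds (lam * x i₀ ^ (m - 1))) := by
      simpa using (hgc.tendsto 0).mono_left
        (nhdsWithin_le_nhds (s := Set.Ioi (0 : ℝ)))
    have hev : ∀ᶠ δ in nhdsWithin (0 : ℝ) (Set.Ioi 0),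
        lam * (x i₀ + δ) ^ (m - 1) < T :=
      Filter.Tendsto.eventually_lt_const hlt htd
    obtain ⟨δ, hδT, hδpos⟩ := (hev.and self_mem_nhdsWithin).exists
    set gδ : ℝ := lam * (x i₀ + δ) ^ (m - 1) with hgδ
    have hxδpos : 0 < (x i₀ + δ) ^ (m - 1) :=
      pow_pos (by linarith [hx0 i₀] : (0 : ℝ) < x i₀ + δ) _
    set τ : ℝ := min (cmin * δ ^ (m - 1)) ((T - gδ) / (x i₀ + δ) ^ (m - 1)) with hτ
    have hτpos : 0 < τ := by
      refine lt_min (by positivity) (div_pos (by linarith) hxδpos)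
    set x' : Fin n → ℝ := fun j => x j + if j = i₀ then δ else 0 with hx'def
    have hx'0 : ∀ j, 0 ≤ x' j := fun j => by
      have := hx0 j
      simp only [hx'def]
      split <;> linarith
    have hxx' : ∀ j, x j ≤ x' j := fun j => by
      simp only [hx'def]; split <;> linarith
    have hx'i₀ : x' i₀ = x i₀ + δ := by simp [hx'def]
    have hfeas' : ∀ i, (lam + τ) * x' i ^ (m - 1) ≤ tmul C x' i := by
      intro i
      by_cases hi : i = i₀
      · rw [hi, hx'i₀]
        have h1 : τ * (x i₀ + δ) ^ (m - 1) ≤ T - gδ := by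
          have := mul_le_mul_of_nonneg_right
            (min_le_right (cmin * δ ^ (m - 1)) ((T - gδ) / (x i₀ + δ) ^ (m - 1)))
            hxδpos.le
          rwa [div_mul_cancel₀ _ hxδpos.ne'] at this
        have h2 : T ≤ tmul C x' i₀ := by
          rw [hT]
          exact tmul_mono hCn hx0 hxx' i₀
        calc (lam + τ) * (x i₀ + δ) ^ (m - 1)
            = gδ + τ * (x i₀ + δ) ^ (m - 1) := by rw [hgδ]; ring
          _ ≤ T := by linarith
          _ ≤ tmul C x' i₀ := h2
      · have hup := tmul_update_ge hCn hx0 hδpos.le i₀ i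
        have hx'i : x' i = x i := by simp [hx'def, hi]
        have hpow : x i₀ ^ (m - 1) + δ ^ (m - 1) ≤ (x i₀ + δ) ^ (m - 1) :=
          pow_add_pow_le (hx0 i₀) hδpos.le hp0
        have hcle : cmin ≤ C i (fun _ => i₀) := hmin i (Finset.mem_univ i)
        have hd : cmin * δ ^ (m - 1) ≤
            C i (fun _ => i₀) * ((x i₀ + δ) ^ (m - 1) - x i₀ ^ (m - 1)) := by
          refine mul_le_mul hcle (by linarith) (by positivity) (hC i _).le
        have hx1 : x i ≤ 1 := hxle1 q hqS' i
        have hxp1 : x i ^ (m - 1) ≤ 1 := pow_le_one₀ (hx0 i) hx1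
        have hτ1 : τ ≤ cmin * δ ^ (m - 1) := min_le_left _ _
        have h5 : τ * x i ^ (m - 1) ≤ cmin * δ ^ (m - 1) :=
          (mul_le_mul_of_nonneg_left hxp1 hτpos.le).trans (by rw [mul_one]; exact hτ1)
        rw [hx'i]
        have h6 := hfeas i
        nlinarith [hup, hd, h5, h6]
    -- normalize
    have hsum' : (∑ j, x' j) = 1 + δ := by
      simp only [hx'def]
      rw [Finset.sum_add_distrib, hxsum, Finset.sum_ite_eq' Finset.univ i₀ (fun _ => δ)]
      simp
    have h1δ : (0 : ℝ) < 1 + δ := by linarith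
    set x'' : Fin n → ℝ := (1 + δ)⁻¹ • x' with hx''def
    have hq'S : (lam + τ, x'') ∈ S := by
      refine ⟨show (0 : ℝ) ≤ lam + τ by linarith, fun i => ?_, ?_, fun i => ?_⟩
      · show 0 ≤ x'' i
        simp only [hx''def, Pi.smul_apply, smul_eq_mul]
        exact mul_nonneg (by positivity) (hx'0 i)
      · show (∑ i, x'' i) = 1
        simp only [hx''def, Pi.smul_apply, smul_eq_mul]
        rw [← Finset.mul_sum, hsum', inv_mul_cancel₀ h1δ.ne']
      · show (lam + τ) * x'' i ^ (m - 1) ≤ tmul C x'' i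
        have h7 := hfeas' i
        have h8 : tmul C x'' i = ((1 + δ)⁻¹) ^ (m - 1) * tmul C x' i :=
          tmul_smul' C _ x' i
        have h9 : x'' i = (1 + δ)⁻¹ * x' i := rfl
        rw [h8, h9, mul_pow]
        calc (lam + τ) * (((1 + δ)⁻¹) ^ (m - 1) * x' i ^ (m - 1))
            = ((1 + δ)⁻¹) ^ (m - 1) * ((lam + τ) * x' i ^ (m - 1)) := by ring
          _ ≤ ((1 + δ)⁻¹) ^ (m - 1) * tmul C x' i :=
            mul_le_mul_of_nonneg_left h7 (by positivity)
    have : lam + τ ≤ lam := le_csSup hbdd ⟨(lam + τ, x''), hq'S, rfl⟩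
    linarith
  -- positivity of x
  obtain ⟨j₀, hj₀⟩ : ∃ j₀, 0 < x j₀ := by
    by_contra h
    push_neg at h
    have : (∑ i, x i) = 0 :=
      Finset.sum_eq_zero fun i _ => le_antisymm (h i) (hx0 i)
    rw [hxsum] at this
    norm_num at this
  have hxpos : ∀ i, 0 < x i := by
    intro i
    rcases lt_or_eq_of_le (hx0 i) with h | h
    · exact h
    · exfalso
      have hxi : x i = 0 := h.symm
      have h1 : tmul C x i = 0 := by
        rw [heq i, hxi, zero_pow hp0, mul_zero]
      have h2 : C i (fun _ => j₀) * ∏ t : Fin (m - 1), x ((fun _ => j₀) t) ≤ tmul C x i :=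
        Finset.single_le_sum
          (f := fun f : Fin (m - 1) → Fin n => C i f * ∏ t, x (f t))
          (fun f _ => mul_nonneg (hC i f).le (Finset.prod_nonneg fun t _ => hx0 _))
          (Finset.mem_univ _)
      have h3 : (0 : ℝ) < C i (fun _ => j₀) * ∏ t : Fin (m - 1), x ((fun _ => j₀) t) := by
        have : (∏ t : Fin (m - 1), x ((fun _ => j₀) t)) = x j₀ ^ (m - 1) := by
          simp [Finset.prod_const, Finset.card_univ]
        rw [this]
        exact mul_pos (hC i _) (pow_pos hj₀ _)
      linarith
  exact ⟨lam, x, hlam0, hxpos, hxsum, heq⟩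

end AuxPos
section AuxWeak

variable {m n : ℕ}

lemma lam_bound (hn : 1 ≤ n) {C : Tensor m n} (hC : TNonneg C)
    {lam : ℝ} {x : Fin n → ℝ} (hx0 : ∀ i, 0 ≤ x i) (hsum : (∑ i, x i) = 1)
    (hfe : ∀ i, lam * x i ^ (m - 1) ≤ tmul C x i) (hlam : 0 ≤ lam) :
    lam ≤ (∑ i, ∑ f : Fin (m - 1) → Fin n, C i f) * (n : ℝ) ^ (m - 1) := by
  have hnpos : (0 : ℝ) < n := by exact_mod_cast hn
  set Rmax : ℝ := ∑ i, ∑ f : Fin (m - 1) → Fin n, C i f with hR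
  have hxle1 : ∀ i, x i ≤ 1 := by
    intro i
    calc x i ≤ ∑ j, x j := Finset.single_le_sum (fun j _ => hx0 j) (Finset.mem_univ i)
      _ = 1 := hsum
  obtain ⟨i, hi⟩ : ∃ i, 1 / (n : ℝ) ≤ x i := by
    by_contra h
    push_neg at h
    have : (∑ i, x i) < ∑ _i : Fin n, 1 / (n : ℝ) :=
      Finset.sum_lt_sum_of_nonempty ⟨⟨0, by omega⟩, Finset.mem_univ _⟩ (fun i _ => h i)
    rw [hsum, Finset.sum_const, Finset.card_univ, Fintype.card_fin,
      nsmul_eq_mul, mul_one_div, div_self hnpos.ne'] at this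
    exact lt_irrefl _ this
  have htle : tmul C x i ≤ Rmax := by
    have h1 : tmul C x i ≤ ∑ f : Fin (m - 1) → Fin n, C i f := by
      refine Finset.sum_le_sum fun f _ => ?_
      have h2 : (∏ t, x (f t)) ≤ 1 :=
        Finset.prod_le_one (fun t _ => hx0 _) (fun t _ => hxle1 _)
      nlinarith [hC i f, h2]
    refine h1.trans ?_
    exact Finset.single_le_sum
      (f := fun i => ∑ f : Fin (m - 1) → Fin n, C i f)
      (fun i _ => Finset.sum_nonneg fun f _ => hC i f) (Finset.mem_univ i)
  have h1 : lam * (1 / (n : ℝ)) ^ (m - 1) ≤ Rmax :=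
    (mul_le_mul_of_nonneg_left (pow_le_pow_left₀ (by positivity) hi _) hlam).trans
      ((hfe i).trans htle)
  have ha : (0 : ℝ) < (n : ℝ) ^ (m - 1) := by positivity
  rw [one_div, inv_pow] at h1
  calc lam = lam * ((n : ℝ) ^ (m - 1))⁻¹ * (n : ℝ) ^ (m - 1) := by field_simp
    _ ≤ Rmax * (n : ℝ) ^ (m - 1) := mul_le_mul_of_nonneg_right h1 ha.le

/-- Weak Perron–Frobenius for nonnegative tensors. -/
lemma weakPF (hm : 2 ≤ m) (hn : 1 ≤ n) (C : Tensor m n) (hC : TNonneg C) :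
    ∃ (lam : ℝ) (x : Fin n → ℝ), 0 ≤ lam ∧ (∀ i, 0 ≤ x i) ∧ (∑ i, x i = 1) ∧
      (∀ i, tmul C x i = lam * x i ^ (m - 1)) ∧
      (∀ μ : ℂ, IsEigenvalue C μ → ‖μ‖ ≤ lam) ∧
      (∀ r : ℝ, lam < r → ∃ z : Fin n → ℝ, (∀ i, 0 < z i) ∧
        ∀ i, tmul C z i < r * z i ^ (m - 1)) := by
  classical
  set One : Tensor m n := fun _ _ => (1 : ℝ) with hOne
  set Ck : ℕ → Tensor m n := fun k => fun i f => C i f + 1 / (k + 1) with hCk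
  have hkpos : ∀ k : ℕ, (0 : ℝ) < 1 / (k + 1) := fun k => by positivity
  have hCkpos : ∀ k, ∀ (i : Fin n) f, 0 < Ck k i f := fun k i f =>
    add_pos_of_nonneg_of_pos (hC i f) (hkpos k)
  choose lam xk hl0 hxpos hxsum heig using fun k =>
    posPF hm hn (Ck k) (hCkpos k)
  have hxle1 : ∀ k i, xk k i ≤ 1 := by
    intro k i
    calc xk k i ≤ ∑ j, xk k j :=
        Finset.single_le_sum (fun j _ => (hxpos k j).le) (Finset.mem_univ i)
      _ = 1 := hxsum k
  set Rbig : ℝ := ∑ i, ∑ f : Fin (m - 1) → Fin n, (C i f + 1) with hRbig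
  have hlb : ∀ k, lam k ≤ Rbig * (n : ℝ) ^ (m - 1) := by
    intro k
    have h1 := lam_bound hn (fun i f => (hCkpos k i f).le)
      (fun i => (hxpos k i).le) (hxsum k) (fun i => (heig k i).ge) (hl0 k)
    refine h1.trans ?_
    have h2 : (∑ i, ∑ f : Fin (m - 1) → Fin n, Ck k i f) ≤ Rbig := by
      refine Finset.sum_le_sum fun i _ => Finset.sum_le_sum fun f _ => ?_
      have : 1 / ((k : ℝ) + 1) ≤ 1 := by
        rw [div_le_one (by positivity)]
        simp [Nat.cast_nonneg]
      simp only [hCk]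
      linarith
    exact mul_le_mul_of_nonneg_right h2 (by positivity)
  set M₀ : ℝ := max (Rbig * (n : ℝ) ^ (m - 1)) 0 with hM₀
  set K : Set (ℝ × (Fin n → ℝ)) := (Set.Icc 0 M₀) ×ˢ (Set.Icc (0 : Fin n → ℝ) 1)
    with hK
  have hKco : IsCompact K := isCompact_Icc.prod isCompact_Icc
  set u : ℕ → ℝ × (Fin n → ℝ) := fun k => (lam k, xk k) with hu
  have huK : ∀ k, u k ∈ K := by
    intro k
    refine ⟨⟨hl0 k, (hlb k).trans (le_max_left _ _)⟩, ?_, ?_⟩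
    · intro i; exact (hxpos k i).le
    · intro i; exact hxle1 k i
  obtain ⟨a, haK, φ, hφ, hconv⟩ := hKco.tendsto_subseq huK
  set lam₀ : ℝ := a.1 with hlam₀
  set x₀ : Fin n → ℝ := a.2 with hx₀
  have hlamconv : Filter.Tendsto (fun j => lam (φ j)) Filter.atTop (nhds lam₀) :=
    (continuous_fst.tendsto a).comp hconv
  have hxconv : Filter.Tendsto (fun j => xk (φ j)) Filter.atTop (nhds x₀) :=
    (continuous_snd.tendsto a).comp hconv
  have hxconvi : ∀ i, Filter.Tendsto (fun j => xk (φ j) i) Filter.atTop (nhds (x₀ i)) :=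
    fun i => ((continuous_apply i).tendsto x₀).comp hxconv
  have hlam₀0 : 0 ≤ lam₀ := haK.1.1
  have hx₀0 : ∀ i, 0 ≤ x₀ i := fun i => haK.2.1 i
  have hsum₀ : (∑ i, x₀ i) = 1 := by
    have h1 : Filter.Tendsto (fun j => ∑ i, xk (φ j) i) Filter.atTop (nhds (∑ i, x₀ i)) :=
      tendsto_finset_sum _ fun i _ => hxconvi i
    have h2 : (fun j => ∑ i, xk (φ j) i) = fun _ => (1 : ℝ) :=
      funext fun j => hxsum (φ j)
    rw [h2] at h1
    exact (tendsto_nhds_unique tendsto_const_nhds h1).symm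
  have hφtop : Filter.Tendsto φ Filter.atTop Filter.atTop := hφ.tendsto_atTop
  have htmulsplit : ∀ k (x : Fin n → ℝ) i,
      tmul (Ck k) x i = tmul C x i + (1 / (k + 1)) * tmul One x i := by
    intro k x i
    unfold tmul
    rw [Finset.mul_sum, ← Finset.sum_add_distrib]
    refine Finset.sum_congr rfl fun f _ => ?_
    show (C i f + 1 / (k + 1)) * _ = _
    simp only [hOne]
    ring
  have hOnebd : ∀ k i, tmul One (xk k) i ≤ (n : ℝ) ^ (m - 1) := by
    intro k i
    unfold tmul
    have : ∀ f : Fin (m - 1) → Fin n, One i f * ∏ t, xk k (f t) ≤ 1 := by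
      intro f
      simp only [hOne, one_mul]
      exact Finset.prod_le_one (fun t _ => (hxpos k _).le) (fun t _ => hxle1 k _)
    calc (∑ f : Fin (m - 1) → Fin n, One i f * ∏ t, xk k (f t))
        ≤ ∑ _f : Fin (m - 1) → Fin n, (1 : ℝ) := Finset.sum_le_sum fun f _ => this f
      _ = (n : ℝ) ^ (m - 1) := by
        rw [Finset.sum_const, Finset.card_univ, Fintype.card_fun]
        simp [Fintype.card_fin]
  have hOne0 : ∀ k i, 0 ≤ tmul One (xk k) i := by
    intro k i
    exact tmul_nonneg' (fun _ _ => zero_le_one) (fun j => (hxpos k j).le) i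
  have heig₀ : ∀ i, tmul C x₀ i = lam₀ * x₀ i ^ (m - 1) := by
    intro i
    have hL : Filter.Tendsto (fun j => tmul (Ck (φ j)) (xk (φ j)) i)
        Filter.atTop (nhds (tmul C x₀ i)) := by
      have h1 : Filter.Tendsto (fun j => tmul C (xk (φ j)) i)
          Filter.atTop (nhds (tmul C x₀ i)) :=
        ((continuous_tmul C i).tendsto x₀).comp hxconv
      have h2 : Filter.Tendsto (fun j => (1 / ((φ j : ℝ) + 1)) * tmul One (xk (φ j)) i)
          Filter.atTop (nhds 0) := by
        refine squeeze_zero_norm (a := fun j => (n : ℝ) ^ (m - 1) * (1 / ((φ j : ℝ) + 1)))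
          (fun j => ?_) ?_
        · rw [Real.norm_eq_abs, abs_of_nonneg
            (mul_nonneg (hkpos (φ j)).le (hOne0 (φ j) i))]
          rw [mul_comm]
          exact mul_le_mul_of_nonneg_right (hOnebd (φ j) i) (hkpos (φ j)).le
        · have h3 : Filter.Tendsto (fun j => 1 / ((φ j : ℝ) + 1)) Filter.atTop (nhds 0) :=
            tendsto_one_div_add_atTop_nhds_zero_nat.comp hφtop
          have := h3.const_mul ((n : ℝ) ^ (m - 1))
          simpa using this
        
      have := h1.add h2
      rw [add_zero] at this
      refine this.congr fun j => ?_
      rw [htmulsplit]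
    have hR : Filter.Tendsto (fun j => lam (φ j) * xk (φ j) i ^ (m - 1))
        Filter.atTop (nhds (lam₀ * x₀ i ^ (m - 1))) :=
      hlamconv.mul ((hxconvi i).pow _)
    have heq : (fun j => tmul (Ck (φ j)) (xk (φ j)) i)
        = fun j => lam (φ j) * xk (φ j) i ^ (m - 1) :=
      funext fun j => heig (φ j) i
    rw [heq] at hL
    exact tendsto_nhds_unique hL hR
  have hcw : ∀ μ : ℂ, IsEigenvalue C μ → ‖μ‖ ≤ lam₀ := by
    intro μ hμ
    have hj : ∀ j, ‖μ‖ ≤ lam (φ j) := by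
      intro j
      refine cw_bound hn hC (hxpos (φ j)) (fun i => ?_) hμ
      rw [← heig (φ j) i]
      refine tmul_le_of_le (fun i f => ?_) (fun i => (hxpos (φ j) i).le) i
      show C i f ≤ C i f + 1 / ((φ j : ℝ) + 1)
      linarith [hkpos (φ j)]
    exact ge_of_tendsto hlamconv (Filter.Eventually.of_forall hj)
  refine ⟨lam₀, x₀, hlam₀0, hx₀0, hsum₀, heig₀, hcw, ?_⟩
  intro r hr
  have hev : ∀ᶠ j in Filter.atTop, lam (φ j) < r :=
    Filter.Tendsto.eventually_lt_const hr hlamconv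
  obtain ⟨j, hj⟩ := hev.exists
  refine ⟨xk (φ j), hxpos (φ j), fun i => ?_⟩
  have h1 : tmul C (xk (φ j)) i ≤ lam (φ j) * xk (φ j) i ^ (m - 1) := by
    rw [← heig (φ j) i]
    refine tmul_le_of_le (fun i f => ?_) (fun i => (hxpos (φ j) i).le) i
    show C i f ≤ C i f + 1 / ((φ j : ℝ) + 1)
    linarith [hkpos (φ j)]
  refine h1.trans_lt ?_
  exact mul_lt_mul_of_pos_right hj (pow_pos (hxpos (φ j) i) _)

end AuxWeak
section AuxFinal

variable {m n : ℕ}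

lemma mulVec_apply' (M : Matrix (Fin n) (Fin n) ℝ) (v : Fin n → ℝ) (i : Fin n) :
    M.mulVec v i = ∑ j, M i j * v j := rfl

lemma idT_const (hm : 2 ≤ m) (i j : Fin n) :
    idT m n i (fun _ => j) = if j = i then (1 : ℝ) else 0 := by
  have ht₀ : (0 : ℕ) < m - 1 := by omega
  have hiff : (∀ t : Fin (m - 1), (fun _ : Fin (m - 1) => j) t = i) ↔ j = i :=
    ⟨fun h => h ⟨0, ht₀⟩, fun h t => h⟩
  simp only [idT, hiff]

lemma maj_idT (hm : 2 ≤ m) : maj (idT m n) = (1 : Matrix (Fin n) (Fin n) ℝ) := by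
  ext i j
  rw [maj, idT_const hm, Matrix.one_apply]
  by_cases h : i = j
  · simp [h]
  · have h' : ¬j = i := fun hh => h hh.symm
    simp [h, h']

lemma mmul_one (T : Tensor m n) : mmul (1 : Matrix (Fin n) (Fin n) ℝ) T = T := by
  funext j f
  show (∑ j₂, (1 : Matrix (Fin n) (Fin n) ℝ) j j₂ * T j₂ f) = T j f
  simp [Matrix.one_apply, ite_mul]

lemma maj_mmul_idT (hm : 2 ≤ m) (P : Matrix (Fin n) (Fin n) ℝ) :
    maj (mmul P (idT m n)) = P := by
  ext i j
  show (∑ j₂, P i j₂ * idT m n j₂ (fun _ => j)) = P i j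
  have : ∀ j₂, idT m n j₂ (fun _ => j) = if j₂ = j then (1 : ℝ) else 0 := by
    intro j₂
    rw [idT_const hm]
    by_cases h : j = j₂
    · simp [h]
    · have h' : ¬j₂ = j := fun hh => h hh.symm
      simp [h, h']
  simp_rw [this, mul_ite, mul_one, mul_zero]
  rw [Finset.sum_ite_eq' Finset.univ j (fun j₂ => P i j₂)]
  simp

end AuxFinal
theorem stmt4 {m n : ℕ} (hm : 2 ≤ m) (hn : 1 ≤ n)
    (A : Tensor m n) (hA : StrongM A) (hdiag : UnitDiag A)
    (s k : ℕ) (hs1 : 1 ≤ s) (hs2 : s ≤ n - 1) (hk1 : 1 ≤ k) (hk2 : k ≤ n - 1)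
    (α β : Fin n → ℝ)
    (hα : ∀ i : Fin n, (i : ℕ) + s < n → α i ∈ Set.Icc (0 : ℝ) 1)
    (hβ : ∀ i : Fin n, k ≤ (i : ℕ) → β i ∈ Set.Icc (0 : ℝ) 1) :
    ∃ x₁ : Fin n → ℝ, x₁ ≠ 0 ∧ (∀ i, 0 ≤ x₁ i) ∧
      (∀ i, tmul (Ltens A + Ftens A) x₁ i = rho (Ltens A + Ftens A) * x₁ i ^ (m - 1)) ∧
      (∀ i, tmul (mmul (maj (idT m n))⁻¹ (F2 A α β s k)) x₁ i ≤
            tmul (mmul (maj (E1 A α β s k))⁻¹ (F1 A α β s k)) x₁ i) := by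
  classical
  obtain ⟨η, B, hBnn, hρB, hAeq⟩ := hA
  have ht₀ : (0 : ℕ) < m - 1 := by omega
  set C : Tensor m n := Ltens A + Ftens A with hCdef
  have hCval : ∀ i f, C i f = idT m n i f - A i f := by
    intro i f
    show (Ltens A + Ftens A) i f = _
    simp only [Pi.add_apply, Ftens, Pi.sub_apply]
    ring
  have hAval : ∀ i f, A i f = η * idT m n i f - B i f := by
    intro i f
    rw [hAeq]
    simp only [Pi.sub_apply, Pi.smul_apply, smul_eq_mul]
  have hCnn : TNonneg C := by
    intro i f
    rw [hCval]
    by_cases hfi : f = (fun _ => i)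
    · rw [hfi, idT_const hm, if_pos rfl, hdiag i]
      norm_num
    · have hidT0 : idT m n i f = 0 := by
        unfold idT
        have h' : ¬ ∀ t, f t = i := fun hh => hfi (funext hh)
        simp [h']
      have hAf : A i f = -B i f := by
        rw [hAval, hidT0]; ring
      rw [hidT0, hAf]
      simpa using hBnn i f
  obtain ⟨lam, x₀, hlam0, hx0, hxsum, heig, hcw, hzex⟩ := weakPF hm hn C hCnn
  have hx₀ne : x₀ ≠ 0 := by
    intro h
    rw [h] at hxsum
    simp at hxsum
  set y : Fin n → ℂ := fun j => (x₀ j : ℂ) with hy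
  have hyne : y ≠ 0 := by
    intro h
    apply hx₀ne
    funext j
    rw [hy] at h
    have h1 : ((x₀ j : ℂ)) = 0 := congrFun h j
    have h2 : x₀ j = 0 := by exact_mod_cast h1
    simpa using h2
  have hCeig : IsEigenvalue C (lam : ℂ) := by
    refine ⟨y, hyne, fun i => ?_⟩
    have h1 : tmulC C y i = (tmul C x₀ i : ℂ) := tmulC_coe C x₀ i
    rw [h1, heig i]
    push_cast
    ring
  have hrho : rho C = lam := by
    have hmem : lam ∈ {r : ℝ | ∃ μ : ℂ, IsEigenvalue C μ ∧ r = ‖μ‖} := by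
      refine ⟨(lam : ℂ), hCeig, ?_⟩
      rw [Complex.norm_real, Real.norm_eq_abs, abs_of_nonneg hlam0]
    have hub : ∀ r ∈ {r : ℝ | ∃ μ : ℂ, IsEigenvalue C μ ∧ r = ‖μ‖}, r ≤ lam := by
      rintro r ⟨μ, hμ, rfl⟩
      exact hcw μ hμ
    exact le_antisymm (csSup_le ⟨lam, hmem⟩ hub) (le_csSup ⟨lam, hub⟩ hmem)
  have hBval : ∀ i f, B i f = C i f + (η - 1) * idT m n i f := by
    intro i f
    rw [hCval, hAval]; ring
  have hBeig : IsEigenvalue B ((lam + η - 1 : ℝ) : ℂ) := by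
    refine ⟨y, hyne, fun i => ?_⟩
    have h1 : tmulC B y i = tmulC C y i + ((η : ℂ) - 1) * tmulC (idT m n) y i := by
      unfold tmulC
      rw [Finset.mul_sum, ← Finset.sum_add_distrib]
      refine Finset.sum_congr rfl fun f _ => ?_
      rw [hBval i f]
      push_cast
      ring
    have h2 : tmulC C y i = (lam : ℂ) * y i ^ (m - 1) := by
      rw [tmulC_coe C x₀ i, heig i]
      push_cast
      ring
    rw [h1, tmulC_idT hm, h2]
    push_cast
    ring
  have hρB0 : 0 ≤ rho B := by
    have h1 := le_csSup (rho_bddAbove hn B) ⟨((lam + η - 1 : ℝ) : ℂ), hBeig, rfl⟩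
    exact (norm_nonneg _).trans h1
  have habs : |lam + η - 1| ≤ rho B := by
    have h1 := le_csSup (rho_bddAbove hn B) ⟨((lam + η - 1 : ℝ) : ℂ), hBeig, rfl⟩
    rwa [Complex.norm_real, Real.norm_eq_abs] at h1
  have hlam1 : lam < 1 := by
    rcases abs_cases (lam + η - 1) with ⟨he, -⟩ | ⟨he, hneg⟩
    · rw [he] at habs; linarith
    · linarith
  obtain ⟨z, hzpos, hzlt⟩ := hzex 1 hlam1
  set w : Fin n → ℝ := fun j => z j ^ (m - 1) with hw
  have hwpos : ∀ j, 0 < w j := fun j => pow_pos (hzpos j) _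
  set Q : Matrix (Fin n) (Fin n) ℝ := Smat A α s + Kmat A β k with hQ
  have hCmajnn : ∀ i j, 0 ≤ C i (fun _ => j) := fun i j => hCnn i _
  have hQb : ∀ i j, 0 ≤ Q i j ∧ Q i j ≤ C i (fun _ => j) := by
    intro i j
    have hCj : ∀ (_ : j ≠ i), C i (fun _ => j) = -(maj A i j) := by
      intro hji
      rw [hCval, idT_const hm, if_neg hji]
      show 0 - A i (fun _ => j) = -(maj A i j)
      rw [maj]
      ring
    show 0 ≤ Smat A α s i j + Kmat A β k i j ∧
      Smat A α s i j + Kmat A β k i j ≤ C i (fun _ => j)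
    by_cases h1 : (j : ℕ) = (i : ℕ) + s
    · have h2 : ¬((i : ℕ) = (j : ℕ) + k) := by omega
      have hji : j ≠ i := by
        intro hh; rw [hh] at h1; omega
      have hins : (i : ℕ) + s < n := by rw [← h1]; exact j.isLt
      obtain ⟨hα0, hα1⟩ := hα i hins
      have hS : Smat A α s i j = α i * (-(maj A i j)) := by
        unfold Smat; rw [if_pos h1]; ring
      have hK : Kmat A β k i j = 0 := by unfold Kmat; rw [if_neg h2]
      rw [hS, hK, add_zero, ← hCj hji]
      exact ⟨mul_nonneg hα0 (hCmajnn i j), mul_le_of_le_one_left (hCmajnn i j) hα1⟩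
    · by_cases h2 : (i : ℕ) = (j : ℕ) + k
      · have hji : j ≠ i := by intro hh; rw [hh] at h2; omega
        have hki : k ≤ (i : ℕ) := by omega
        obtain ⟨hβ0, hβ1⟩ := hβ i hki
        have hS : Smat A α s i j = 0 := by unfold Smat; rw [if_neg h1]
        have hK : Kmat A β k i j = β i * (-(maj A i j)) := by
          unfold Kmat; rw [if_pos h2]; ring
        rw [hS, hK, zero_add, ← hCj hji]
        exact ⟨mul_nonneg hβ0 (hCmajnn i j), mul_le_of_le_one_left (hCmajnn i j) hβ1⟩
      · have hS : Smat A α s i j = 0 := by unfold Smat; rw [if_neg h1]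
        have hK : Kmat A β k i j = 0 := by unfold Kmat; rw [if_neg h2]
        rw [hS, hK, add_zero]
        exact ⟨le_refl 0, hCmajnn i j⟩
  have hNle : ∀ i, (∑ j, C i (fun _ => j) * w j) ≤ tmul C z i := by
    intro i
    have hinj : Function.Injective (fun j : Fin n => (fun _ : Fin (m - 1) => j)) := by
      intro a b hab
      exact congrFun hab ⟨0, ht₀⟩
    have h1 : (∑ j, C i (fun _ => j) * w j)
        = ∑ f ∈ Finset.univ.image (fun j : Fin n => (fun _ : Fin (m - 1) => j)),
            C i f * ∏ t, z (f t) := by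
      rw [Finset.sum_image (fun a _ b _ hab => hinj hab)]
      refine Finset.sum_congr rfl fun j _ => ?_
      congr 1
      rw [hw, Finset.prod_const, Finset.card_univ, Fintype.card_fin]
    rw [h1]
    refine Finset.sum_le_sum_of_subset_of_nonneg (Finset.subset_univ _) ?_
    intro f _ _
    exact mul_nonneg (hCnn i f) (Finset.prod_nonneg fun t _ => (hzpos _).le)
  have hQw : ∀ i, Q.mulVec w i < w i := by
    intro i
    have h1 : Q.mulVec w i ≤ ∑ j, C i (fun _ => j) * w j := by
      rw [mulVec_apply']
      exact Finset.sum_le_sum fun j _ =>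
        mul_le_mul_of_nonneg_right ((hQb i j).2) (hwpos j).le
    have h2 := hzlt i
    rw [one_mul] at h2
    calc Q.mulVec w i ≤ ∑ j, C i (fun _ => j) * w j := h1
      _ ≤ tmul C z i := hNle i
      _ < z i ^ (m - 1) := h2
      _ = w i := rfl
  set P : Matrix (Fin n) (Fin n) ℝ := Pmat A α β s k with hPdef
  have hP1Q : P = 1 + Q := by rw [hPdef, hQ, Pmat, add_assoc]
  have hdet : P.det ≠ 0 := by
    intro h0
    obtain ⟨v, hv0, hv⟩ := Matrix.exists_mulVec_eq_zero_iff.mpr h0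
    have hvQ : ∀ i, v i = -(Q.mulVec v i) := by
      intro i
      have h1 := congrFun hv i
      rw [hP1Q, Matrix.add_mulVec, Matrix.one_mulVec] at h1
      have h2 : v i + Q.mulVec v i = 0 := h1
      linarith
    obtain ⟨i₀, -, hi₀⟩ := Finset.exists_max_image Finset.univ
      (fun i => |v i| / w i) ⟨⟨0, by omega⟩, Finset.mem_univ _⟩
    set c : ℝ := |v i₀| / w i₀ with hc
    have hvle : ∀ i, |v i| ≤ c * w i := by
      intro i
      have h1 := hi₀ i (Finset.mem_univ i)
      rw [div_le_div_iff₀ (hwpos i) (hwpos i₀)] at h1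
      rw [hc, div_mul_eq_mul_div, le_div_iff₀ (hwpos i₀)]
      linarith
    have hcpos : 0 < c := by
      obtain ⟨j, hj⟩ : ∃ j, v j ≠ 0 := by
        by_contra hcon; push_neg at hcon; exact hv0 (funext hcon)
      have h1 : 0 < |v j| := abs_pos.mpr hj
      have h2 := hi₀ j (Finset.mem_univ j)
      have h3 := div_pos h1 (hwpos j)
      linarith
    have hvi₀ : |v i₀| = c * w i₀ := by rw [hc, div_mul_cancel₀ _ (hwpos i₀).ne']
    have hfalse : |v i₀| < |v i₀| := by
      calc |v i₀| = |Q.mulVec v i₀| := by rw [hvQ i₀, abs_neg]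
        _ ≤ ∑ j, |Q i₀ j * v j| := by
            rw [mulVec_apply']
            exact Finset.abs_sum_le_sum_abs _ _
        _ ≤ ∑ j, Q i₀ j * (c * w j) := by
            refine Finset.sum_le_sum fun j _ => ?_
            rw [abs_mul, abs_of_nonneg (hQb i₀ j).1]
            exact mul_le_mul_of_nonneg_left (hvle j) (hQb i₀ j).1
        _ = c * Q.mulVec w i₀ := by
            rw [mulVec_apply', Finset.mul_sum]
            exact Finset.sum_congr rfl fun j _ => by ring
        _ < c * w i₀ := mul_lt_mul_of_pos_left (hQw i₀) hcpos
        _ = |v i₀| := hvi₀.symm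
    exact lt_irrefl _ hfalse
  have hPP : P⁻¹ * P = 1 := Matrix.nonsing_inv_mul P (isUnit_iff_ne_zero.mpr hdet)
  refine ⟨x₀, hx₀ne, hx0, ?_, ?_⟩
  · intro i
    rw [hrho, heig i]
  · intro i
    set w₀ : Fin n → ℝ := fun j => x₀ j ^ (m - 1) with hw₀
    have hveq : (fun j => tmul C x₀ j) = lam • w₀ := by
      funext j
      rw [heig j]
      rfl
    rw [maj_idT hm, inv_one, mmul_one]
    have hF2 : F2 A α β s k = mmul P C - mmul Q (idT m n) := by
      unfold F2
      rw [hPdef, hQ, hCdef]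
    have hE1 : maj (E1 A α β s k) = P := by
      show maj (mmul (Pmat A α β s k) (idT m n)) = P
      rw [maj_mmul_idT hm, hPdef]
    have hF1 : F1 A α β s k = mmul P C := by
      unfold F1
      rw [hPdef, hCdef]
    rw [hF2, hE1, hF1, tmul_sub', tmul_mmul, tmul_mmul, tmul_mmul, tmul_mmul, hveq,
      Matrix.mulVec_mulVec, hPP, Matrix.one_mulVec]
    have hidv : (fun j => tmul (idT m n) x₀ j) = w₀ := by
      funext j
      rw [tmul_idT hm]
    rw [hidv]
    have hQw₀nn : 0 ≤ Q.mulVec w₀ i := by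
      rw [mulVec_apply']
      exact Finset.sum_nonneg fun j _ => mul_nonneg (hQb i j).1 (pow_nonneg (hx0 j) _)
    have hPw : P.mulVec (lam • w₀) i = lam * w₀ i + lam * Q.mulVec w₀ i := by
      rw [Matrix.mulVec_smul, hP1Q, Matrix.add_mulVec, Matrix.one_mulVec]
      show lam * ((w₀ + Q.mulVec w₀) i) = _
      show lam * (w₀ i + Q.mulVec w₀ i) = _
      ring
    rw [hPw]
    show lam * w₀ i + lam * Q.mulVec w₀ i - Q.mulVec w₀ i ≤ (lam • w₀) i
    show _ ≤ lam * w₀ i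
    nlinarith [hQw₀nn, hlam1]

end

end MultilinearPaper
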